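/- arXiv:1601.07803 — 3 statements merged into one kernel-verified Lean document; each statement's English description precedes it below -/
import Mathlib

section
/- Let ν and μ be integrable probability measures on ℝ. If U_μ(x) - C ≤ U_ν(x) for all x ∈ ℝ where C = sup_{x∈ℝ}{U_μ(x) - U_ν(x)}, then C ≥ |m_μ - m_ν|, where m_ν, m_μ are the means of ν and μ. -/
/-!
Write `A_μ(x) = ∫ |y - x| dμ(y) = -U_μ(x)`. Since `|t| = 2 t⁺ - t`,
`A_μ(x) = (x - m_μ) + 2 ∫ (y - x)⁺ dμ(y)`, and the correction term is nonnegative and tends to `0`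
as `x → ∞` by dominated convergence. The hypothesis `A_ν ≤ A_μ + C` therefore gives
`x - m_ν ≤ x - m_μ + o(1) + C`, i.e. `m_μ - m_ν ≤ C`; the same argument at `-∞` with
`A_μ(x) = (m_μ - x) + 2 ∫ (x - y)⁺ dμ(y)` gives `m_ν - m_μ ≤ C`.
-/

open MeasureTheory Filter Topology

section PosPart

variable {α : Type*} [MeasurableSpace α] {μ : Measure α} {f : α → ℝ}

theorem tendsto_integral_posPart_sub_atTop (hf : Integrable f μ) :
    Tendsto (fun x : ℝ => ∫ a, (f a - x)⁺ ∂μ) atTop (𝓝 0) := by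
  have hbound : ∀ᶠ x : ℝ in atTop, ∀ᵐ a ∂μ, ‖(f a - x)⁺‖ ≤ |f a| := by
    filter_upwards [eventually_ge_atTop 0] with x hx
    refine Eventually.of_forall fun a => ?_
    rw [Real.norm_of_nonneg (posPart_nonneg _), posPart_def]
    exact sup_le (by linarith [le_abs_self (f a)]) (abs_nonneg _)
  have hlim : ∀ᵐ a ∂μ, Tendsto (fun x : ℝ => (f a - x)⁺) atTop (𝓝 0) :=
    Eventually.of_forall fun a => tendsto_const_nhds.congr' <| by
      filter_upwards [eventually_ge_atTop (f a)] with x hx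
      exact (posPart_eq_zero.2 (by linarith)).symm
  have hmeas : ∀ x : ℝ, AEStronglyMeasurable (fun a => (f a - x)⁺) μ := fun x =>
    continuous_posPart.comp_aestronglyMeasurable
      (hf.aestronglyMeasurable.sub aestronglyMeasurable_const)
  simpa using tendsto_integral_filter_of_dominated_convergence _
    (Eventually.of_forall hmeas) hbound hf.abs hlim

theorem tendsto_integral_posPart_sub_atBot (hf : Integrable f μ) :
    Tendsto (fun x : ℝ => ∫ a, (x - f a)⁺ ∂μ) atBot (𝓝 0) := by
  simpa [Function.comp_def, neg_add_eq_sub] using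
    (tendsto_integral_posPart_sub_atTop hf.neg).comp tendsto_neg_atBot_atTop

variable [IsProbabilityMeasure μ]

theorem integral_abs_sub_eq_sub_integral_add (hf : Integrable f μ) (x : ℝ) :
    ∫ a, |f a - x| ∂μ = x - ∫ a, f a ∂μ + 2 * ∫ a, (f a - x)⁺ ∂μ := by
  have habs : ∀ t : ℝ, |t| = 2 * t⁺ - t := fun t => by
    linarith [abs_add_eq_two_nsmul_posPart t, two_nsmul t⁺]
  have hfx : Integrable (fun a => f a - x) μ := hf.sub (integrable_const x)
  have hpos : Integrable (fun a => (f a - x)⁺) μ := hfx.pos_part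
  simp_rw [habs]
  rw [integral_sub (hpos.const_mul 2) hfx, integral_const_mul,
    integral_sub hf (integrable_const x), integral_const]
  simp only [probReal_univ, smul_eq_mul, one_mul]
  ring

theorem integral_abs_sub_eq_integral_sub_add (hf : Integrable f μ) (x : ℝ) :
    ∫ a, |f a - x| ∂μ = ∫ a, f a ∂μ - x + 2 * ∫ a, (x - f a)⁺ ∂μ := by
  have h := integral_abs_sub_eq_sub_integral_add (f := fun a => -f a) hf.neg (-x)
  simp only [neg_sub_neg, abs_sub_comm x, integral_neg] at h
  linarith

end PosPart

theorem abs_integral_sub_integral_le_of_integral_abs_sub_le {μ ν : Measure ℝ}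
    [IsProbabilityMeasure μ] [IsProbabilityMeasure ν]
    (hμ : Integrable (fun y : ℝ => y) μ) (hν : Integrable (fun y : ℝ => y) ν) {C : ℝ}
    (h : ∀ x : ℝ, ∫ y, |y - x| ∂ν ≤ ∫ y, |y - x| ∂μ + C) :
    |(∫ y, y ∂μ) - ∫ y, y ∂ν| ≤ C := by
  rw [abs_sub_le_iff]
  constructor
  · have key : (∫ y, y ∂μ) - (∫ y, y ∂ν) - C ≤ 2 * 0 :=
      ge_of_tendsto' ((tendsto_integral_posPart_sub_atTop hμ).const_mul 2) fun x => by
        have hνx := integral_abs_sub_eq_sub_integral_add hν x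
        have hνpos : 0 ≤ ∫ y, (y - x)⁺ ∂ν := integral_nonneg fun _ => posPart_nonneg _
        linarith [h x, integral_abs_sub_eq_sub_integral_add hμ x]
    linarith
  · have key : (∫ y, y ∂ν) - (∫ y, y ∂μ) - C ≤ 2 * 0 :=
      ge_of_tendsto' ((tendsto_integral_posPart_sub_atBot hμ).const_mul 2) fun x => by
        have hνx := integral_abs_sub_eq_integral_sub_add hν x
        have hνpos : 0 ≤ ∫ y, (x - y)⁺ ∂ν := integral_nonneg fun _ => posPart_nonneg _
        linarith [h x, integral_abs_sub_eq_integral_sub_add hμ x]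
    linarith

theorem stmt_2_general (μ ν : Measure ℝ) [IsProbabilityMeasure μ] [IsProbabilityMeasure ν]
    (hμ : Integrable (fun y : ℝ => y) μ) (hν : Integrable (fun y : ℝ => y) ν)
    (C : ℝ) (hord : ∀ x : ℝ, (-∫ y, |y - x| ∂μ) - C ≤ -∫ y, |y - x| ∂ν) :
    |(∫ y, y ∂μ) - ∫ y, y ∂ν| ≤ C :=
  abs_integral_sub_integral_le_of_integral_abs_sub_le hμ hν fun x => by linarith [hord x]

/-- If `C = sup_x {U_μ(x) - U_ν(x)}` satisfies `U_μ - C ≤ U_ν` on `ℝ`, then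
`C ≥ |m_μ - m_ν|`, where `m_ν, m_μ` are the means. -/
theorem stmt_2 (μ ν : Measure ℝ) [IsProbabilityMeasure μ] [IsProbabilityMeasure ν]
    (hμ : Integrable (fun y : ℝ => y) μ) (hν : Integrable (fun y : ℝ => y) ν)
    (C : ℝ) (hC : C = ⨆ x : ℝ, ((-∫ y, |y - x| ∂μ) - (-∫ y, |y - x| ∂ν)))
    (hord : ∀ x : ℝ, (-∫ y, |y - x| ∂μ) - C ≤ -∫ y, |y - x| ∂ν) :
    |(∫ y, y ∂μ) - ∫ y, y ∂ν| ≤ C :=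
  stmt_2_general μ ν hμ hν C hord
end

section
/- A closed set B ⊆ [-∞,+∞] × [0,+∞] satisfying (a) (x,+∞) ∈ B for all x, (b) (±∞,t) ∈ B for all t, (c) (x,t) ∈ B and s > t imply (x,s) ∈ B, can be represented as B = {(x,t) : t ≥ R(x)} for a lower semi-continuous function R : ℝ → [0,+∞]. -/
open Set

/-!
The barrier function is `R x = inf {t | (x, t) ∈ B}`. Closedness of `B` puts `(x, R x)` in `B`,
and upward closedness in time then makes `B` (over finite `x`) exactly the epigraph of `R`;
a function with closed epigraph is lower semicontinuous.
-/

section BarrierFunction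

variable {X Y : Type*} [CompleteLinearOrder Y]

def barrierFunction (C : Set (X × Y)) (x : X) : Y :=
  sInf {t | (x, t) ∈ C}

variable [TopologicalSpace X] [TopologicalSpace Y] [OrderTopology Y]

theorem barrierFunction_mem {C : Set (X × Y)} (hC : IsClosed C) {x : X}
    (hx : ∃ t, (x, t) ∈ C) : (x, barrierFunction C x) ∈ C :=
  IsClosed.sInf_mem hx (hC.preimage (Continuous.prodMk_right x))

theorem mem_iff_barrierFunction_le {C : Set (X × Y)} (hC : IsClosed C)
    (hne : ∀ x, ∃ t, (x, t) ∈ C) (hup : ∀ x t s, (x, t) ∈ C → t < s → (x, s) ∈ C)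
    (x : X) (t : Y) : (x, t) ∈ C ↔ barrierFunction C x ≤ t := by
  refine ⟨fun h => sInf_le h, fun h => ?_⟩
  rcases h.eq_or_lt with h | h
  · exact h ▸ barrierFunction_mem hC (hne x)
  · exact hup x _ t (barrierFunction_mem hC (hne x)) h

theorem lowerSemicontinuous_barrierFunction {C : Set (X × Y)} (hC : IsClosed C)
    (hne : ∀ x, ∃ t, (x, t) ∈ C) (hup : ∀ x t s, (x, t) ∈ C → t < s → (x, s) ∈ C) :
    LowerSemicontinuous (barrierFunction C) := by
  have hepi : {p : X × Y | barrierFunction C p.1 ≤ p.2} = C :=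
    Set.ext fun p => (mem_iff_barrierFunction_le hC hne hup p.1 p.2).symm
  rw [lowerSemicontinuous_iff_isClosed_epigraph, hepi]
  exact hC

end BarrierFunction

theorem stmt_3_general (B : Set (EReal × EReal))
    (hsub : B ⊆ univ ×ˢ {t : EReal | 0 ≤ t})
    (hclosed : IsClosed B)
    (ha : ∀ x : EReal, (x, (⊤ : EReal)) ∈ B)
    (hc : ∀ x t s : EReal, (x, t) ∈ B → t < s → (x, s) ∈ B) :
    ∃ R : ℝ → EReal, LowerSemicontinuous R ∧ (∀ x, 0 ≤ R x) ∧
      ∀ (x : ℝ) (t : EReal), 0 ≤ t → (((x : EReal), t) ∈ B ↔ R x ≤ t) := by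
  set C : Set (ℝ × EReal) := Prod.map (↑) id ⁻¹' B
  have hC : IsClosed C := hclosed.preimage (continuous_coe_real_ereal.prodMap continuous_id)
  have hne : ∀ x, ∃ t, (x, t) ∈ C := fun x => ⟨⊤, ha x⟩
  have hup : ∀ x t s, (x, t) ∈ C → t < s → (x, s) ∈ C := fun x t s => hc x t s
  exact ⟨barrierFunction C, lowerSemicontinuous_barrierFunction hC hne hup,
    fun x => (hsub (barrierFunction_mem hC (hne x))).2,
    fun x t _ => mem_iff_barrierFunction_le hC hne hup x t⟩

/-- A Root barrier `B ⊆ [-∞,+∞] × [0,+∞]`, i.e. a closed set containing the lines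
`t = +∞` and `x = ±∞` and closed under increasing time, can be represented as
`B = {(x,t) : t ≥ R(x)}` (over finite `x` and nonnegative times `t`) for a
lower semicontinuous function `R : ℝ → [0,+∞]`. -/
theorem stmt_3 (B : Set (EReal × EReal))
    (hsub : B ⊆ univ ×ˢ {t : EReal | 0 ≤ t})
    (hclosed : IsClosed B)
    (ha : ∀ x : EReal, (x, (⊤ : EReal)) ∈ B)
    (hb : ∀ t : EReal, 0 ≤ t → ((⊤ : EReal), t) ∈ B ∧ ((⊥ : EReal), t) ∈ B)
    (hc : ∀ x t s : EReal, (x, t) ∈ B → t < s → (x, s) ∈ B) :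
    ∃ R : ℝ → EReal, LowerSemicontinuous R ∧ (∀ x, 0 ≤ R x) ∧
      ∀ (x : ℝ) (t : EReal), 0 ≤ t → (((x : EReal), t) ∈ B ↔ R x ≤ t) :=
  stmt_3_general B hsub hclosed ha hc
end

section
/- Let ν, μ be integrable probability measures on ℝ and F ⊆ ℝ a set such that U_μ - C = U_{μ̂} - C_L on F and U_μ - C ≤ U_{μ̂} - C_L on all of ℝ, for some constants C, C_L and integrable measure μ̂. Then for every x ∈ F: μ((-∞,x)) ≤ μ̂((-∞,x)) ≤ μ̂((-∞,x]) ≤ μ((-∞,x]); in particular μ((-∞,x)) = μ̂((-∞,x)) whenever μ({x}) = 0, and μ({x}) ≥ μ̂({x}) whenever μ({x}) > 0. -/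
/-!
For `x ∈ F` the function `U_μ - U_μhat` attains its maximum over `ℝ` at `x`, so its right
derivative at `x` is `≤ 0` and its left derivative is `≥ 0`. The one-sided derivatives of a
potential are `(U_ρ)'₊(x) = 1 - 2 ρ(-∞, x]` and `(U_ρ)'₋(x) = 1 - 2 ρ(-∞, x)`: the slopes of
`z ↦ |y - z|` are bounded by `1`, so they can be differentiated under the integral by dominated
convergence. This gives `μhat(-∞, x] ≤ μ(-∞, x]` and `μ(-∞, x) ≤ μhat(-∞, x)`, and the statements
about atoms follow by subtracting.
-/

open MeasureTheory Set Filter Topology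
open scoped NNReal

lemma abs_slope_le_of_lipschitzWith {f : ℝ → ℝ} {K : ℝ≥0} (hf : LipschitzWith K f) (x z : ℝ) :
    |slope f x z| ≤ K := by
  rcases eq_or_ne z x with rfl | hzx
  · simp
  rw [slope_def_field, abs_div, div_le_iff₀ (abs_pos.2 (sub_ne_zero.2 hzx))]
  simpa [Real.dist_eq] using hf.dist_le_mul z x

theorem hasDerivWithinAt_integral_of_lipschitzWith {α : Type*} [MeasurableSpace α]
    {ρ : Measure α} [IsFiniteMeasure ρ] {f : α → ℝ → ℝ} {f' : α → ℝ} {K : ℝ≥0} {s : Set ℝ}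
    {x : ℝ} (hint : ∀ z, Integrable (fun y => f y z) ρ) (hlip : ∀ y, LipschitzWith K (f y))
    (hf' : ∀ y, HasDerivWithinAt (f y) (f' y) s x) :
    HasDerivWithinAt (fun z => ∫ y, f y z ∂ρ) (∫ y, f' y ∂ρ) s x := by
  have hslope : slope (fun z => ∫ y, f y z ∂ρ) x = fun z => ∫ y, slope (f y) x z ∂ρ := by
    ext z
    simp only [slope_def_module]
    rw [integral_smul, integral_sub (hint z) (hint x)]
  rw [hasDerivWithinAt_iff_tendsto_slope, hslope]
  refine tendsto_integral_filter_of_dominated_convergence (fun _ => (K : ℝ)) ?_ ?_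
    (integrable_const _) ?_
  · refine Eventually.of_forall fun z => ?_
    simp only [slope_def_module]
    exact (((hint z).sub (hint x)).smul (z - x)⁻¹).aestronglyMeasurable
  · exact Eventually.of_forall fun z => Eventually.of_forall fun y =>
      abs_slope_le_of_lipschitzWith (hlip y) x z
  · exact Eventually.of_forall fun y => hasDerivWithinAt_iff_tendsto_slope.1 (hf' y)

theorem HasDerivWithinAt.le_of_eventuallyLE_nhdsGT {g h : ℝ → ℝ} {g' h' x : ℝ}
    (hg : HasDerivWithinAt g g' (Ioi x) x) (hh : HasDerivWithinAt h h' (Ioi x) x)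
    (hle : g ≤ᶠ[𝓝[>] x] h) (heq : g x = h x) : g' ≤ h' := by
  rw [hasDerivWithinAt_iff_tendsto_slope' self_notMem_Ioi] at hg hh
  refine le_of_tendsto_of_tendsto hg hh ?_
  filter_upwards [hle, self_mem_nhdsWithin] with z hz hxz
  rw [slope_def_field, slope_def_field, heq]
  exact div_le_div_of_nonneg_right (by linarith) (sub_nonneg.2 (le_of_lt hxz))

theorem HasDerivWithinAt.le_of_eventuallyLE_nhdsLT {g h : ℝ → ℝ} {g' h' x : ℝ}
    (hg : HasDerivWithinAt g g' (Iio x) x) (hh : HasDerivWithinAt h h' (Iio x) x)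
    (hle : g ≤ᶠ[𝓝[<] x] h) (heq : g x = h x) : h' ≤ g' := by
  rw [hasDerivWithinAt_iff_tendsto_slope' self_notMem_Iio] at hg hh
  refine le_of_tendsto_of_tendsto hh hg ?_
  filter_upwards [hle, self_mem_nhdsWithin] with z hz hzx
  rw [slope_def_field, slope_def_field, heq]
  exact div_le_div_of_nonpos_of_le (sub_nonpos.2 (le_of_lt hzx)) (by linarith)

lemma lipschitzWith_abs_sub (y : ℝ) : LipschitzWith 1 (fun z : ℝ => |y - z|) :=
  LipschitzWith.of_dist_le_mul fun a b => by
    simpa [Real.dist_eq, abs_sub_comm a b] using abs_abs_sub_abs_le_abs_sub (y - a) (y - b)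

lemma hasDerivWithinAt_abs_sub_Ioi (y x : ℝ) :
    HasDerivWithinAt (fun z => |y - z|) (if y ∈ Iic x then 1 else -1) (Ioi x) x := by
  by_cases hyx : y ≤ x
  · rw [if_pos (mem_Iic.2 hyx)]
    refine ((hasDerivAt_id x).sub_const y).hasDerivWithinAt.congr (fun z hz => ?_) ?_
    · rw [abs_sub_comm, abs_of_nonneg (by linarith [mem_Ioi.1 hz]), id]
    · rw [abs_sub_comm, abs_of_nonneg (by linarith), id]
  · rw [if_neg (mt mem_Iic.1 hyx)]
    refine (((hasDerivAt_id x).const_sub y).congr_of_eventuallyEq ?_).hasDerivWithinAt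
    filter_upwards [eventually_lt_nhds (not_le.1 hyx)] with z hz
    rw [abs_of_pos (by linarith), id]

lemma hasDerivWithinAt_abs_sub_Iio (y x : ℝ) :
    HasDerivWithinAt (fun z => |y - z|) (if y ∈ Iio x then 1 else -1) (Iio x) x := by
  by_cases hyx : y < x
  · rw [if_pos (mem_Iio.2 hyx)]
    refine (((hasDerivAt_id x).sub_const y).congr_of_eventuallyEq ?_).hasDerivWithinAt
    filter_upwards [eventually_gt_nhds hyx] with z hz
    rw [abs_sub_comm, abs_of_pos (by linarith), id]
  · rw [if_neg (mt mem_Iio.1 hyx)]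
    refine ((hasDerivAt_id x).const_sub y).hasDerivWithinAt.congr (fun z hz => ?_) ?_
    · rw [abs_of_nonneg (by linarith [mem_Iio.1 hz]), id]
    · rw [abs_of_nonneg (by linarith), id]

lemma integral_ite_one_neg_one {α : Type*} [MeasurableSpace α] (ρ : Measure α)
    [IsProbabilityMeasure ρ] {s : Set α} [DecidablePred (· ∈ s)] (hs : MeasurableSet s) :
    ∫ y, (if y ∈ s then (1 : ℝ) else -1) ∂ρ = 2 * ρ.real s - 1 := by
  have hpt : (fun y => if y ∈ s then (1 : ℝ) else -1) = fun y => 2 * s.indicator 1 y - 1 := by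
    ext y
    by_cases hy : y ∈ s <;> norm_num [hy]
  rw [hpt, integral_sub ((integrable_const _).indicator hs |>.const_mul 2) (integrable_const _),
    integral_const_mul, integral_indicator_one hs]
  simp

noncomputable def potential (ρ : Measure ℝ) (x : ℝ) : ℝ := -∫ y, |y - x| ∂ρ

section potential

variable (ρ : Measure ℝ) [IsProbabilityMeasure ρ] (hρ : Integrable (fun y : ℝ => y) ρ) (x : ℝ)
include hρ

lemma integrable_abs_sub_const (z : ℝ) : Integrable (fun y => |y - z|) ρ :=
  (hρ.sub (integrable_const z)).abs

theorem hasDerivWithinAt_potential_Ioi :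
    HasDerivWithinAt (potential ρ) (1 - 2 * ρ.real (Iic x)) (Ioi x) x := by
  have h := hasDerivWithinAt_integral_of_lipschitzWith (integrable_abs_sub_const ρ hρ)
    (fun y => lipschitzWith_abs_sub y) (fun y => hasDerivWithinAt_abs_sub_Ioi y x)
  rw [integral_ite_one_neg_one ρ measurableSet_Iic] at h
  rw [show 1 - 2 * ρ.real (Iic x) = -(2 * ρ.real (Iic x) - 1) by ring]
  exact h.neg

theorem hasDerivWithinAt_potential_Iio :
    HasDerivWithinAt (potential ρ) (1 - 2 * ρ.real (Iio x)) (Iio x) x := by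
  have h := hasDerivWithinAt_integral_of_lipschitzWith (integrable_abs_sub_const ρ hρ)
    (fun y => lipschitzWith_abs_sub y) (fun y => hasDerivWithinAt_abs_sub_Iio y x)
  rw [integral_ite_one_neg_one ρ measurableSet_Iio] at h
  rw [show 1 - 2 * ρ.real (Iio x) = -(2 * ρ.real (Iio x) - 1) by ring]
  exact h.neg

end potential

lemma measure_Iic_eq_measure_Iio_add_singleton {α : Type*} [PartialOrder α] [MeasurableSpace α]
    [MeasurableSingletonClass α] (ρ : Measure α) (x : α) : ρ (Iic x) = ρ (Iio x) + ρ {x} := by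
  rw [← Iio_union_right, measure_union (by simp) (measurableSet_singleton x)]

theorem stmt_18_general (μ μhat : Measure ℝ)
    [IsProbabilityMeasure μ] [IsProbabilityMeasure μhat]
    (hμint : Integrable (fun y : ℝ => y) μ)
    (hμhatint : Integrable (fun y : ℝ => y) μhat)
    (F : Set ℝ) (C CL : ℝ)
    (hle : ∀ x : ℝ, (-∫ y, |y - x| ∂μ) - C ≤ (-∫ y, |y - x| ∂μhat) - CL)
    (heq : ∀ x ∈ F, (-∫ y, |y - x| ∂μ) - C = (-∫ y, |y - x| ∂μhat) - CL) :
    ∀ x ∈ F,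
      (μ (Iio x) ≤ μhat (Iio x) ∧ μhat (Iio x) ≤ μhat (Iic x) ∧
        μhat (Iic x) ≤ μ (Iic x)) ∧
      (μ {x} = 0 → μ (Iio x) = μhat (Iio x)) ∧
      (0 < μ {x} → μhat {x} ≤ μ {x}) := by
  intro x hx
  have hR : μhat (Iic x) ≤ μ (Iic x) := by
    have h := ((hasDerivWithinAt_potential_Ioi μ hμint x).sub_const C).le_of_eventuallyLE_nhdsGT
      ((hasDerivWithinAt_potential_Ioi μhat hμhatint x).sub_const CL)
      (Eventually.of_forall hle) (heq x hx)
    simp only [measureReal_def] at h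
    exact (ENNReal.toReal_le_toReal (measure_ne_top _ _) (measure_ne_top _ _)).1 (by linarith)
  have hL : μ (Iio x) ≤ μhat (Iio x) := by
    have h := ((hasDerivWithinAt_potential_Iio μ hμint x).sub_const C).le_of_eventuallyLE_nhdsLT
      ((hasDerivWithinAt_potential_Iio μhat hμhatint x).sub_const CL)
      (Eventually.of_forall hle) (heq x hx)
    simp only [measureReal_def] at h
    exact (ENNReal.toReal_le_toReal (measure_ne_top _ _) (measure_ne_top _ _)).1 (by linarith)
  have hM : μhat (Iio x) ≤ μhat (Iic x) := measure_mono Iio_subset_Iic_self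
  refine ⟨⟨hL, hM, hR⟩, fun hx0 => le_antisymm hL ?_, fun _ => ?_⟩
  · simpa only [measure_Iic_eq_measure_Iio_add_singleton μ x, hx0, add_zero] using hM.trans hR
  · rw [measure_Iic_eq_measure_Iio_add_singleton μhat,
      measure_Iic_eq_measure_Iio_add_singleton μ] at hR
    exact (ENNReal.add_le_add_iff_left (measure_ne_top μhat _)).1 (hR.trans (add_le_add_left hL _))

/-- Let `ν, μ` be integrable probability measures, `μ̂` an integrable (probability)
measure, `F ⊆ ℝ`, and constants `C, C_L` such that `U_μ - C ≤ U_{μ̂} - C_L` on `ℝ`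
with equality on `F`. Then for every `x ∈ F`:
`μ((-∞,x)) ≤ μ̂((-∞,x)) ≤ μ̂((-∞,x]) ≤ μ((-∞,x])`; in particular
`μ((-∞,x)) = μ̂((-∞,x))` when `μ({x}) = 0`, and `μ̂({x}) ≤ μ({x})` when
`μ({x}) > 0`. -/
theorem stmt_18 (ν μ μhat : Measure ℝ)
    [IsProbabilityMeasure ν] [IsProbabilityMeasure μ] [IsProbabilityMeasure μhat]
    (hνint : Integrable (fun y : ℝ => y) ν)
    (hμint : Integrable (fun y : ℝ => y) μ)
    (hμhatint : Integrable (fun y : ℝ => y) μhat)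
    (F : Set ℝ) (C CL : ℝ)
    (hle : ∀ x : ℝ, (-∫ y, |y - x| ∂μ) - C ≤ (-∫ y, |y - x| ∂μhat) - CL)
    (heq : ∀ x ∈ F, (-∫ y, |y - x| ∂μ) - C = (-∫ y, |y - x| ∂μhat) - CL) :
    ∀ x ∈ F,
      (μ (Iio x) ≤ μhat (Iio x) ∧ μhat (Iio x) ≤ μhat (Iic x) ∧
        μhat (Iic x) ≤ μ (Iic x)) ∧
      (μ {x} = 0 → μ (Iio x) = μhat (Iio x)) ∧
      (0 < μ {x} → μhat {x} ≤ μ {x}) :=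
  stmt_18_general μ μhat hμint hμhatint F C CL hle heq
end
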